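/- Let G be a compact Lie group and 𝒞 a family of orbit types of G with (G) ∈ 𝒞. Let 𝕐 be a metrizable G-space, 𝕏 ⊆ 𝕐 an OPEN invariant subspace, 𝕏′ a G-space of orbit type 𝒞, and h : 𝕏 → 𝕏′ an equigeny. Then there exist a G-space 𝕐′ of orbit type 𝒞, an equivariant embedding e of 𝕏′ onto an open invariant subset of 𝕐′, and an equigeny H : 𝕐 → 𝕐′ such that H restricted to 𝕏 equals e ∘ h. -/

import Mathlib

open scoped Manifold
open MulAction Set TopologicalSpace Topology

universe u v

/-- `G` is a compact Lie group: a compact topological group admitting a structure of a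
finite-dimensional real smooth manifold in which multiplication and inversion are smooth. -/
def IsCompactLieGroup (G : Type*) [Group G] [TopologicalSpace G] : Prop :=
  CompactSpace G ∧ IsTopologicalGroup G ∧
    ∃ (n : ℕ) (cs : ChartedSpace (EuclideanSpace ℝ (Fin n)) G),
      @LieGroup ℝ _ (EuclideanSpace ℝ (Fin n)) _ (EuclideanSpace ℝ (Fin n)) _ _ (𝓡 n) (⊤ : ℕ∞) G _ _ cs

variable (G : Type u) [Group G] [TopologicalSpace G]

/-- A subset of a `G`-space is invariant if it is stable under the action. -/
def IsInvariantSet {Z : Type*} [SMul G Z] (A : Set Z) : Prop :=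
  ∀ g : G, ∀ a ∈ A, g • a ∈ A

/-- A map is equivariant on a subset `A`. -/
def EquivariantOn {Z X : Type*} [SMul G Z] [SMul G X] (φ : Z → X) (A : Set Z) : Prop :=
  ∀ g : G, ∀ a ∈ A, φ (g • a) = g • φ a

/-- The invariant subset `S` of the `G`-space `X`, with the subspace topology and restricted
action, is an equivariant absolute neighborhood extensor (`G`-ANE): every partial `G`-map from a
closed invariant subset of a metrizable `G`-space with values in `S` extends to a `G`-map of an
invariant neighborhood with values in `S`. -/
def IsGANESubset (X : Type v) [TopologicalSpace X] [MulAction G X] (S : Set X) : Prop :=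
  ∀ (Z : Type u) [TopologicalSpace Z] [MulAction G Z], ContinuousSMul G Z →
    MetrizableSpace Z →
    ∀ A : Set Z, IsClosed A → IsInvariantSet G A →
    ∀ φ : Z → X, ContinuousOn φ A → EquivariantOn G φ A → MapsTo φ A S →
    ∃ U : Set Z, IsOpen U ∧ IsInvariantSet G U ∧ A ⊆ U ∧
      ∃ ψ : Z → X, ContinuousOn ψ U ∧ EquivariantOn G ψ U ∧ MapsTo ψ U S ∧ EqOn ψ φ A

/-- The `G`-space `X` is an equivariant absolute neighborhood extensor (`G`-ANE). -/
def IsGANE (X : Type v) [TopologicalSpace X] [MulAction G X] : Prop :=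
  IsGANESubset.{u, v} G X Set.univ

/-- The invariant subset `S` of the `G`-space `X` is an equivariant absolute extensor
(`G`-AE): every partial `G`-map from a closed invariant subset of a metrizable `G`-space with
values in `S` extends to a `G`-map of the whole space with values in `S`. -/
def IsGAESubset (X : Type v) [TopologicalSpace X] [MulAction G X] (S : Set X) : Prop :=
  ∀ (Z : Type u) [TopologicalSpace Z] [MulAction G Z], ContinuousSMul G Z →
    MetrizableSpace Z →
    ∀ A : Set Z, IsClosed A → IsInvariantSet G A →
    ∀ φ : Z → X, ContinuousOn φ A → EquivariantOn G φ A → MapsTo φ A S →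
    ∃ ψ : Z → X, Continuous ψ ∧ EquivariantOn G ψ Set.univ ∧ MapsTo ψ Set.univ S ∧ EqOn ψ φ A

/-- A map is isovariant on `A`: it is equivariant there and preserves isotropy subgroups. -/
def IsovariantOn {Z X : Type*} [SMul G Z] [SMul G X] (φ : Z → X) (A : Set Z) : Prop :=
  EquivariantOn G φ A ∧ ∀ a ∈ A, ∀ g : G, g • a = a ↔ g • φ a = φ a

/-- The `G`-space `X` is an isovariant absolute extensor: every partial isovariant map from a
closed invariant subset of a metrizable `G`-space extends to an isovariant map of the whole
space. -/
def IsIsovAE (X : Type v) [TopologicalSpace X] [MulAction G X] : Prop :=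
  ∀ (Z : Type u) [TopologicalSpace Z] [MulAction G Z], ContinuousSMul G Z →
    MetrizableSpace Z →
    ∀ A : Set Z, IsClosed A → IsInvariantSet G A →
    ∀ φ : Z → X, ContinuousOn φ A → IsovariantOn G φ A →
    ∃ ψ : Z → X, Continuous ψ ∧ IsovariantOn G ψ Set.univ ∧ EqOn ψ φ A

/-- `(K) ≤ (H)`: the subgroup `K` is contained in some conjugate of `H`. -/
def SubConj (K H : Subgroup G) : Prop :=
  ∃ g : G, K ≤ Subgroup.map (MulAut.conj g).toMonoidHom H

/-- A family of orbit types: a conjugation-invariant set of closed subgroups of `G`. -/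
def IsOrbitTypeFamily (𝒞 : Set (Subgroup G)) : Prop :=
  (∀ H ∈ 𝒞, IsClosed (H : Set G)) ∧
    ∀ H ∈ 𝒞, ∀ g : G, Subgroup.map (MulAut.conj g).toMonoidHom H ∈ 𝒞

/-- The map induced on orbit spaces by an equivariant map. -/
def orbitMapOf {X Y : Type*} [MulAction G X] [MulAction G Y] (f : X → Y)
    (hf : ∀ (g : G) (x : X), f (g • x) = g • f x) :
    Quotient (orbitRel G X) → Quotient (orbitRel G Y) :=
  Quotient.map f (fun a b hab => by
    have hab' : a ∈ orbit G b := hab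
    obtain ⟨g, rfl⟩ := hab'
    show f (g • b) ∈ orbit G (f b)
    exact ⟨g, (hf g b).symm⟩)

/-- An equivariant continuous map is an equigeny if the induced map of orbit spaces is a
homeomorphism. -/
def IsEquigeny {X Y : Type*} [TopologicalSpace X] [TopologicalSpace Y]
    [MulAction G X] [MulAction G Y] (f : X → Y) : Prop :=
  Continuous f ∧ ∃ hf : ∀ (g : G) (x : X), f (g • x) = g • f x,
    IsHomeomorph (orbitMapOf G f hf)

/-- The `G`-space `X` is an equivariant absolute extensor (`G`-AE). -/
def IsGAE (X : Type v) [TopologicalSpace X] [MulAction G X] : Prop :=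
  IsGAESubset.{u, v} G X Set.univ

/-- The problem of extending the equigeny `h : 𝕏 → 𝕏'` over the ambient `G`-space `𝕐 ⊇ 𝕏`
(where `𝕏` sits in `𝕐` via the equivariant embedding `j`) has a `𝒞`-solution: there are a
`G`-space `𝕐'` of orbit type `𝒞`, a closed equivariant embedding `e : 𝕏' → 𝕐'` and an
equigeny `H : 𝕐 → 𝕐'` extending `h`. -/
def SolvesEquigenyExt (𝒞 : Set (Subgroup G))
    (𝕐 : Type u) [TopologicalSpace 𝕐] [MulAction G 𝕐]
    (𝕏 : Type u) [TopologicalSpace 𝕏] [MulAction G 𝕏] (j : 𝕏 → 𝕐)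
    (𝕏' : Type u) [TopologicalSpace 𝕏'] [MulAction G 𝕏'] (h : 𝕏 → 𝕏') : Prop :=
  ∃ (𝕐' : Type u) (_ : TopologicalSpace 𝕐') (_ : MulAction G 𝕐'),
    ContinuousSMul G 𝕐' ∧ (∀ y : 𝕐', MulAction.stabilizer G y ∈ 𝒞) ∧
    ∃ e : 𝕏' → 𝕐', IsClosedEmbedding e ∧ (∀ (g : G) (x : 𝕏'), e (g • x) = g • e x) ∧
      ∃ H : 𝕐 → 𝕐', IsEquigeny G H ∧ H ∘ j = e ∘ h

/-- Variant of `SolvesEquigenyExt` in which `𝕏'` is required to be embedded onto an *open*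
invariant subset of `𝕐'`. -/
def SolvesEquigenyExtOpen (𝒞 : Set (Subgroup G))
    (𝕐 : Type u) [TopologicalSpace 𝕐] [MulAction G 𝕐]
    (𝕏 : Type u) [TopologicalSpace 𝕏] [MulAction G 𝕏] (j : 𝕏 → 𝕐)
    (𝕏' : Type u) [TopologicalSpace 𝕏'] [MulAction G 𝕏'] (h : 𝕏 → 𝕏') : Prop :=
  ∃ (𝕐' : Type u) (_ : TopologicalSpace 𝕐') (_ : MulAction G 𝕐'),
    ContinuousSMul G 𝕐' ∧ (∀ y : 𝕐', MulAction.stabilizer G y ∈ 𝒞) ∧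
    ∃ e : 𝕏' → 𝕐', IsOpenEmbedding e ∧ IsInvariantSet G (Set.range e) ∧
      (∀ (g : G) (x : 𝕏'), e (g • x) = g • e x) ∧
      ∃ H : 𝕐 → 𝕐', IsEquigeny G H ∧ H ∘ j = e ∘ h

/-! The orbits of `Y` lying outside the open invariant set `X` are collapsed to points fixed by
all of `G`; this is allowed because `(G) ∈ 𝒞`. Gluing `X'` to `Y` along `h` then gives a space
`Y'` whose orbit space is still `Y/G`, because `h` induces a homeomorphism `X/G ≅ X'/G` and `X`
is open in `Y`. Joint continuity of the action on the glued space comes from the fact that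
`G × -` preserves quotient maps when `G` is locally compact. -/

open Function

section OrbitMap

variable {G : Type*} [Group G] {X Y Z W : Type*} [MulAction G X] [MulAction G Y]
  [MulAction G Z] [MulAction G W]

theorem orbitMapOf_orbitMapOf_of_comp_eq {f₁ : X → Y} {g₁ : Y → W} {f₂ : X → Z} {g₂ : Z → W}
    (hf₁ : ∀ (g : G) (x : X), f₁ (g • x) = g • f₁ x)
    (hg₁ : ∀ (g : G) (y : Y), g₁ (g • y) = g • g₁ y)
    (hf₂ : ∀ (g : G) (x : X), f₂ (g • x) = g • f₂ x)
    (hg₂ : ∀ (g : G) (z : Z), g₂ (g • z) = g • g₂ z) (hcomm : g₁ ∘ f₁ = g₂ ∘ f₂)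
    (c : Quotient (orbitRel G X)) :
    orbitMapOf G g₁ hg₁ (orbitMapOf G f₁ hf₁ c) = orbitMapOf G g₂ hg₂ (orbitMapOf G f₂ hf₂ c) :=
  Quotient.inductionOn c fun x => congrArg (Quotient.mk _) (congrFun hcomm x)

variable [TopologicalSpace X] [TopologicalSpace Y]

theorem continuous_orbitMapOf {f : X → Y} (hf : ∀ (g : G) (x : X), f (g • x) = g • f x)
    (hfc : Continuous f) : Continuous (orbitMapOf G f hf) :=
  hfc.quotient_map' _

theorem isHomeomorph_orbitMapOf_of_inverse {f : X → Y}
    (hf : ∀ (g : G) (x : X), f (g • x) = g • f x) (hfc : Continuous f)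
    {φ : Y → Quotient (orbitRel G X)} (hφc : Continuous φ) (hφ : ∀ (g : G) (y : Y), φ (g • y) = φ y)
    (hφf : ∀ x, φ (f x) = Quotient.mk _ x)
    (hfφ : ∀ y, orbitMapOf G f hf (φ y) = Quotient.mk _ y) :
    IsHomeomorph (orbitMapOf G f hf) := by
  let φ' : Quotient (orbitRel G Y) → Quotient (orbitRel G X) :=
    Quotient.lift φ (by rintro _ y ⟨g, rfl⟩; exact hφ g y)
  exact isHomeomorph_iff_exists_inverse.mpr
    ⟨continuous_orbitMapOf hf hfc, φ', Quotient.ind hφf, Quotient.ind hfφ, hφc.quotient_lift _⟩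

end OrbitMap

section Gluing

variable (G : Type*) [Group G] {X Y X' : Type*} [MulAction G Y] (j : X → Y)

def outerOrbits : Set (Quotient (orbitRel G Y)) :=
  Quotient.mk _ '' (range j)ᶜ

/-- The type depends on `h` because its topology does: it is the quotient topology of `Y ⊕ X'`
under `extend ⊔ incl`. -/
inductive GluedSpace (h : X → X') : Type _
  | incl : X' → GluedSpace h
  | outer : outerOrbits G j → GluedSpace h

namespace GluedSpace

variable (h : X → X')

def elim {Z : Type*} (ψ : X' → Z) (χ : outerOrbits G j → Z) : GluedSpace G j h → Z
  | incl x' => ψ x'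
  | outer d => χ d

open scoped Classical in
noncomputable def extend (y : Y) : GluedSpace G j h :=
  if hy : y ∈ range j then incl (h hy.choose) else outer ⟨Quotient.mk _ y, y, hy, rfl⟩

variable {G j h}

theorem incl_injective : Injective (incl : X' → GluedSpace G j h) :=
  fun _ _ => incl.inj

theorem extend_apply_of_notMem {y : Y} (hy : y ∉ range j) :
    extend G j h y = outer ⟨Quotient.mk _ y, y, hy, rfl⟩ :=
  dif_neg hy

theorem extend_apply (hj : Injective j) (x : X) : extend G j h (j x) = incl (h x) := by
  have hx : j x ∈ range j := ⟨x, rfl⟩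
  rw [extend, dif_pos hx, hj hx.choose_spec]

theorem extend_eq_incl_iff (hj : Injective j) {y : Y} {x' : X'} :
    extend G j h y = incl x' ↔ ∃ x, h x = x' ∧ j x = y := by
  by_cases hy : y ∈ range j
  · obtain ⟨x, rfl⟩ := hy
    simp [extend_apply hj, hj.eq_iff]
  · simp only [extend_apply_of_notMem hy, reduceCtorEq, false_iff]
    rintro ⟨x, -, rfl⟩
    exact hy ⟨x, rfl⟩

theorem preimage_extend_image_incl (hj : Injective j) (U : Set X') :
    extend G j h ⁻¹' (incl '' U) = j '' (h ⁻¹' U) := by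
  ext y
  constructor
  · rintro ⟨x', hx', hy⟩
    obtain ⟨x, rfl, rfl⟩ := (extend_eq_incl_iff hj).mp hy.symm
    exact ⟨x, hx', rfl⟩
  · rintro ⟨x, hx, rfl⟩
    exact ⟨h x, hx, (extend_apply hj x).symm⟩

section Action

variable [MulAction G X']

instance : SMul G (GluedSpace G j h) where
  smul g
    | incl x' => incl (g • x')
    | outer d => outer d

theorem smul_incl (g : G) (x' : X') : g • (incl x' : GluedSpace G j h) = incl (g • x') :=
  rfl

theorem smul_outer (g : G) (d : outerOrbits G j) : g • (outer d : GluedSpace G j h) = outer d :=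
  rfl

instance : MulAction G (GluedSpace G j h) where
  one_smul v := by cases v <;> simp [smul_incl, smul_outer]
  mul_smul g₁ g₂ v := by cases v <;> simp [smul_incl, smul_outer, mul_smul]

theorem stabilizer_incl (x' : X') :
    stabilizer G (incl x' : GluedSpace G j h) = stabilizer G x' := by
  ext g
  simp [mem_stabilizer_iff, smul_incl]

theorem stabilizer_outer (d : outerOrbits G j) :
    stabilizer G (outer d : GluedSpace G j h) = ⊤ := by
  ext g
  simp [mem_stabilizer_iff, smul_outer]

theorem stabilizer_mem {𝒞 : Set (Subgroup G)} (htop : ⊤ ∈ 𝒞)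
    (htype : ∀ x' : X', stabilizer G x' ∈ 𝒞) (v : GluedSpace G j h) : stabilizer G v ∈ 𝒞 := by
  cases v with
  | incl x' => rw [stabilizer_incl]; exact htype x'
  | outer d => rw [stabilizer_outer]; exact htop

theorem isInvariantSet_range_incl :
    IsInvariantSet G (range (incl : X' → GluedSpace G j h)) := by
  rintro g _ ⟨x', rfl⟩
  exact ⟨g • x', rfl⟩

variable [MulAction G X]

theorem extend_smul (hj : Injective j) (hjeq : ∀ (g : G) (x : X), j (g • x) = g • j x)
    (hh : ∀ (g : G) (x : X), h (g • x) = g • h x) (g : G) (y : Y) :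
    extend G j h (g • y) = g • extend G j h y := by
  by_cases hy : y ∈ range j
  · obtain ⟨x, rfl⟩ := hy
    rw [← hjeq, extend_apply hj, extend_apply hj, hh, smul_incl]
  · have hgy : g • y ∉ range j := by
      rintro ⟨x, hx⟩
      exact hy ⟨g⁻¹ • x, by rw [hjeq, hx, inv_smul_smul]⟩
    rw [extend_apply_of_notMem hy, extend_apply_of_notMem hgy, smul_outer]
    exact congrArg outer (Subtype.ext (Quotient.sound (mem_orbit y g)))

end Action

variable [TopologicalSpace Y] [TopologicalSpace X']

noncomputable instance : TopologicalSpace (GluedSpace G j h) :=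
  .coinduced (Sum.elim (extend G j h) incl) inferInstance

theorem isQuotientMap_sumElim : IsQuotientMap (Sum.elim (extend G j h) incl) := by
  refine ⟨⟨rfl⟩, ?_⟩
  rintro (x' | ⟨_, y, hy, rfl⟩)
  · exact ⟨Sum.inr x', rfl⟩
  · exact ⟨Sum.inl y, extend_apply_of_notMem hy⟩

theorem continuous_extend : Continuous (extend G j h) :=
  isQuotientMap_sumElim.continuous.comp continuous_inl

theorem continuous_incl : Continuous (incl : X' → GluedSpace G j h) :=
  isQuotientMap_sumElim.continuous.comp continuous_inr

theorem isOpen_iff {V : Set (GluedSpace G j h)} :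
    IsOpen V ↔ IsOpen (extend G j h ⁻¹' V) ∧ IsOpen (incl ⁻¹' V : Set X') := by
  rw [isOpen_coinduced, isOpen_sum_iff]
  rfl

theorem isOpenEmbedding_incl [TopologicalSpace X] (hj : IsOpenEmbedding j) (hh : Continuous h) :
    IsOpenEmbedding (incl : X' → GluedSpace G j h) := by
  refine .of_continuous_injective_isOpenMap continuous_incl incl_injective fun U hU => ?_
  rw [isOpen_iff, preimage_extend_image_incl hj.injective, preimage_image_eq U incl_injective]
  exact ⟨hj.isOpenMap _ (hU.preimage hh), hU⟩

variable [MulAction G X] [MulAction G X']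

theorem continuousSMul [TopologicalSpace G] [LocallyCompactSpace G] [ContinuousSMul G Y]
    [ContinuousSMul G X'] (hj : Injective j) (hjeq : ∀ (g : G) (x : X), j (g • x) = g • j x)
    (hh : ∀ (g : G) (x : X), h (g • x) = g • h x) : ContinuousSMul G (GluedSpace G j h) := by
  refine ⟨isQuotientMap_sumElim.continuous_lift_prod_right ?_⟩
  have hlift : (fun p : G × (Y ⊕ X') => p.1 • Sum.elim (extend G j h) incl p.2) =
      Sum.elim (fun p : G × Y => extend G j h (p.1 • p.2))
        (fun p : G × X' => (incl (p.1 • p.2) : GluedSpace G j h)) ∘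
        Homeomorph.prodSumDistrib := by
    funext ⟨g, w⟩
    rcases w with y | x'
    · exact (extend_smul hj hjeq hh g y).symm
    · rfl
  rw [hlift]
  exact ((continuous_extend.comp continuous_smul).sumElim (continuous_incl.comp continuous_smul)).comp
    Homeomorph.prodSumDistrib.continuous

theorem isHomeomorph_orbitMapOf_extend [TopologicalSpace X] (hj : IsOpenEmbedding j)
    (hjeq : ∀ (g : G) (x : X), j (g • x) = g • j x) (hh : ∀ (g : G) (x : X), h (g • x) = g • h x)
    (hhomeo : IsHomeomorph (orbitMapOf G h hh)) :
    IsHomeomorph (orbitMapOf G (extend G j h) (extend_smul hj.injective hjeq hh)) := by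
  let e := hhomeo.homeomorph
  let φ : GluedSpace G j h → Quotient (orbitRel G Y) :=
    elim G j h (fun x' => orbitMapOf G j hjeq (e.symm (Quotient.mk _ x'))) Subtype.val
  have hφext : ∀ y, φ (extend G j h y) = Quotient.mk _ y := by
    intro y
    by_cases hy : y ∈ range j
    · obtain ⟨x, rfl⟩ := hy
      rw [extend_apply hj.injective]
      show orbitMapOf G j hjeq (e.symm (e (Quotient.mk _ x))) = _
      rw [e.symm_apply_apply]
      rfl
    · rw [extend_apply_of_notMem hy]
      rfl
  refine isHomeomorph_orbitMapOf_of_inverse _ continuous_extend ?_ ?_ hφext ?_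
  · rw [isQuotientMap_sumElim.continuous_iff, Sum.comp_elim]
    refine Continuous.sumElim ?_ ?_
    · rw [show φ ∘ extend G j h = Quotient.mk _ from funext hφext]
      exact continuous_quotient_mk'
    · exact (continuous_orbitMapOf hjeq hj.continuous).comp
        (e.symm.continuous.comp continuous_quotient_mk')
  · rintro g (x' | d)
    · exact congrArg (orbitMapOf G j hjeq ∘ e.symm) (Quotient.sound (mem_orbit x' g))
    · rfl
  · rintro (x' | ⟨_, y, hy, rfl⟩)
    · have hcomm : extend G j h ∘ j = incl ∘ h := funext (extend_apply hj.injective)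
      show orbitMapOf G (extend G j h) _ (orbitMapOf G j hjeq (e.symm _)) = _
      rw [orbitMapOf_orbitMapOf_of_comp_eq hjeq _ hh (fun _ _ => smul_incl _ _) hcomm]
      exact congrArg (orbitMapOf G incl _) (e.apply_symm_apply _)
    · exact congrArg (Quotient.mk _) (extend_apply_of_notMem hy)

end GluedSpace

end Gluing

theorem extend_equigeny_open_general (G : Type u) [Group G] [TopologicalSpace G]
    (hG : IsCompactLieGroup G)
    (𝒞 : Set (Subgroup G)) (htop : (⊤ : Subgroup G) ∈ 𝒞)
    (𝕐 : Type u) [TopologicalSpace 𝕐] [MulAction G 𝕐]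
    (h𝕐 : ContinuousSMul G 𝕐)
    (𝕏 : Type u) [TopologicalSpace 𝕏] [MulAction G 𝕏]
    (j : 𝕏 → 𝕐) (hj : IsOpenEmbedding j) (hjeq : ∀ (g : G) (x : 𝕏), j (g • x) = g • j x)
    (𝕏' : Type u) [TopologicalSpace 𝕏'] [MulAction G 𝕏'] (h𝕏' : ContinuousSMul G 𝕏')
    (htype : ∀ x : 𝕏', MulAction.stabilizer G x ∈ 𝒞)
    (h : 𝕏 → 𝕏') (hh : IsEquigeny G h) :
    SolvesEquigenyExtOpen G 𝒞 𝕐 𝕏 j 𝕏' h := by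
  obtain ⟨_, _, -⟩ := hG
  have : LocallyCompactSpace G := inferInstance
  obtain ⟨hhc, hheq, hhomeo⟩ := hh
  refine ⟨GluedSpace G j h, inferInstance, inferInstance,
    GluedSpace.continuousSMul hj.injective hjeq hheq, GluedSpace.stabilizer_mem htop htype,
    GluedSpace.incl, GluedSpace.isOpenEmbedding_incl hj hhc, GluedSpace.isInvariantSet_range_incl,
    GluedSpace.smul_incl, GluedSpace.extend G j h,
    ⟨GluedSpace.continuous_extend, _, GluedSpace.isHomeomorph_orbitMapOf_extend hj hjeq hheq hhomeo⟩,
    funext (GluedSpace.extend_apply hj.injective)⟩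

/-- **Extension of equigenies, open case.** Let `G` be a compact Lie group and `𝒞` a family of
orbit types with `(G) ∈ 𝒞`. If `𝕏` is an open invariant subspace of a metrizable `G`-space `𝕐`
and `h : 𝕏 → 𝕏'` is an equigeny onto a `G`-space of orbit type `𝒞`, then there are a
`G`-space `𝕐'` of orbit type `𝒞`, an equivariant embedding `e` of `𝕏'` onto an open invariant
subset of `𝕐'` and an equigeny `H : 𝕐 → 𝕐'` with `H∣𝕏 = e ∘ h`. -/
theorem extend_equigeny_open (G : Type u) [Group G] [TopologicalSpace G]
    (hG : IsCompactLieGroup G)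
    (𝒞 : Set (Subgroup G)) (h𝒞 : IsOrbitTypeFamily G 𝒞) (htop : (⊤ : Subgroup G) ∈ 𝒞)
    (𝕐 : Type u) [TopologicalSpace 𝕐] [MulAction G 𝕐] [MetrizableSpace 𝕐]
    (h𝕐 : ContinuousSMul G 𝕐)
    (𝕏 : Type u) [TopologicalSpace 𝕏] [MulAction G 𝕏] (h𝕏 : ContinuousSMul G 𝕏)
    (j : 𝕏 → 𝕐) (hj : IsOpenEmbedding j) (hjeq : ∀ (g : G) (x : 𝕏), j (g • x) = g • j x)
    (𝕏' : Type u) [TopologicalSpace 𝕏'] [MulAction G 𝕏'] (h𝕏' : ContinuousSMul G 𝕏')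
    (htype : ∀ x : 𝕏', MulAction.stabilizer G x ∈ 𝒞)
    (h : 𝕏 → 𝕏') (hh : IsEquigeny G h) :
    SolvesEquigenyExtOpen G 𝒞 𝕐 𝕏 j 𝕏' h :=
  extend_equigeny_open_general G hG 𝒞 htop 𝕐 h𝕐 𝕏 j hj hjeq 𝕏' h𝕏' htype h hh
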